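/- (Mixture occupancy equivalence, finite case) Let π_1, ..., π_N be Markovian policies on a finite MDP with γ < 1, and let π̄ be the non-Markovian policy that at the start of each trajectory samples i uniformly from {1,...,N} and follows π_i for the whole trajectory. Then μ_γ^{π̄}(s,a) = (1/N) ∑_{i=1}^N μ_γ^{π_i}(s,a), and the Markovian policy π̃(a|s) = ∑_i μ_γ^{π_i}(s,a) / ∑_i μ_γ^{π_i}(s) satisfies μ_γ^{π̃} = μ_γ^{π̄}. -/

import Mathlib

/-!
State-action occupancy equivalence, finite case.

An MDP with finite state space `S` and action space `A`, initial distribution `p0`,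
transition kernel `p`, and discount factor `γ < 1`. A (possibly non-Markovian) policy
maps a finite history (the past state-action pairs) and the current state to a
distribution over actions. The occupancy `occ γ p0 p π s a` is
`E[∑ₜ γ^t 1(Sₜ = s, Aₜ = a)]`, computed by summing path probabilities over all
trajectory prefixes. The Markovian policy `π̃(a|s) = μ(s,a)/μ(s)` has the same
occupancy as `π`.
-/

open Finset
open scoped ENNReal

/-- The history (of past state-action pairs) seen at step `i` of a trajectory
prefix `w`. -/
def hist {S A : Type*} {t : ℕ} (w : Fin (t + 1) → S × A) (i : Fin (t + 1)) :
    Fin i.1 → S × A :=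
  fun j => w ⟨j.1, lt_trans j.2 i.2⟩

/-- Probability of a trajectory prefix `w = ((S₀,A₀),…,(Sₜ,Aₜ))` under initial
distribution `p0`, transition kernel `p` and history-dependent policy `π`. -/
noncomputable def pathProb {S A : Type*} [Fintype S] [Fintype A]
    (p0 : S → ℝ≥0∞) (p : S × A → S → ℝ≥0∞)
    (π : (t : ℕ) → (Fin t → S × A) → S → A → ℝ≥0∞)
    (t : ℕ) (w : Fin (t + 1) → S × A) : ℝ≥0∞ :=
  p0 (w 0).1 * (∏ i : Fin (t + 1), π i.1 (hist w i) (w i).1 (w i).2) *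
    ∏ i : Fin t, p (w i.castSucc) (w i.succ).1

/-- Discounted occupancy `μ_γ^π(s,a) = E[∑ₜ γ^t 1(Sₜ = s, Aₜ = a)]`. -/
noncomputable def occ {S A : Type*} [Fintype S] [Fintype A] [DecidableEq S] [DecidableEq A]
    (γ : ℝ≥0∞) (p0 : S → ℝ≥0∞) (p : S × A → S → ℝ≥0∞)
    (π : (t : ℕ) → (Fin t → S × A) → S → A → ℝ≥0∞) (s : S) (a : A) : ℝ≥0∞ :=
  ∑' t : ℕ, γ ^ t * ∑ w : Fin (t + 1) → S × A,
    (if w (Fin.last t) = (s, a) then pathProb p0 p π t w else 0)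

/-- A Markovian policy, viewed as a history-dependent policy ignoring the history. -/
def liftMk {S A : Type*} (πm : S → A → ℝ≥0∞) :
    (t : ℕ) → (Fin t → S × A) → S → A → ℝ≥0∞ :=
  fun _ _ s a => πm s a


/-- Probability, under a Markovian policy `πm`, of observing the history `h` of
state-action pairs followed by the current state `s`. -/
noncomputable def histProbM {S A : Type*} [Fintype S] [Fintype A]
    (p0 : S → ℝ≥0∞) (p : S × A → S → ℝ≥0∞) (πm : S → A → ℝ≥0∞) :
    (t : ℕ) → (Fin t → S × A) → S → ℝ≥0∞
  | 0, _, s => p0 s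
  | t + 1, w, s => pathProb p0 p (liftMk πm) t w * p (w (Fin.last t)) s

/-- The non-Markovian mixture policy `π̄`: a latent index `i` is drawn uniformly
at the start of each trajectory and `π_i` is followed throughout. Its action
probabilities given a history are the posterior-weighted averages of the `π_i`. -/
noncomputable def mixturePolicy {S A : Type*} [Fintype S] [Fintype A] {N : ℕ}
    (p0 : S → ℝ≥0∞) (p : S × A → S → ℝ≥0∞) (πs : Fin N → S → A → ℝ≥0∞) :
    (t : ℕ) → (Fin t → S × A) → S → A → ℝ≥0∞ :=
  fun t h s a =>
    (∑ i, histProbM p0 p (πs i) t h s * πs i s a) /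
      (∑ i, histProbM p0 p (πs i) t h s)
section helpers
variable {S A : Type*} [Fintype S] [Fintype A] [DecidableEq S] [DecidableEq A]

lemma sum_snoc {β : Type*} [Fintype β] {M : Type*} [AddCommMonoid M] (t : ℕ)
    (f : (Fin (t + 1) → β) → M) :
    ∑ w : Fin (t + 1) → β, f w = ∑ u : Fin t → β, ∑ x : β, f (Fin.snoc u x) := by
  have h1 : ∑ w : Fin (t + 1) → β, f w
      = ∑ ux : (Fin t → β) × β, f (Fin.snoc ux.1 ux.2) :=
    Fintype.sum_equiv
      ⟨fun w => (Fin.init w, w (Fin.last t)), fun ux => Fin.snoc ux.1 ux.2,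
       fun w => by simp, fun ux => by simp⟩ _ _ (fun w => by simp)
  rw [h1, Fintype.sum_prod_type]

lemma snoc_mk_lt {β : Type*} {t : ℕ} (u : Fin (t + 1) → β) (x : β) (k : ℕ)
    (h : k < t + 1) (h2 : k < t + 2) :
    (Fin.snoc u x : Fin (t + 2) → β) ⟨k, h2⟩ = u ⟨k, h⟩ := by
  have : (⟨k, h2⟩ : Fin (t + 2)) = Fin.castSucc ⟨k, h⟩ := rfl
  rw [this, Fin.snoc_castSucc]

lemma hist_snoc_castSucc {t : ℕ} (u : Fin (t + 1) → S × A) (x : S × A) (i : Fin (t + 1)) :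
    hist (Fin.snoc u x) (Fin.castSucc i) = hist u i := by
  funext j
  exact snoc_mk_lt u x j.1 (lt_trans j.2 i.2) _

lemma hist_snoc_last {t : ℕ} (u : Fin (t + 1) → S × A) (x : S × A) :
    hist (Fin.snoc u x) (Fin.last (t + 1)) = u := by
  funext j
  exact snoc_mk_lt u x j.1 j.2 _

lemma pathProb_snoc (p0 : S → ℝ≥0∞) (p : S × A → S → ℝ≥0∞)
    (π : (t : ℕ) → (Fin t → S × A) → S → A → ℝ≥0∞) (t : ℕ)
    (u : Fin (t + 1) → S × A) (x : S × A) :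
    pathProb p0 p π (t + 1) (Fin.snoc u x) =
      pathProb p0 p π t u * π (t + 1) u x.1 x.2 * p (u (Fin.last t)) x.1 := by
  have hπprod : (∏ i : Fin (t + 2), π i.1 (hist (Fin.snoc u x) i)
        ((Fin.snoc u x : Fin (t+2) → S × A) i).1 ((Fin.snoc u x : Fin (t+2) → S × A) i).2)
      = (∏ i : Fin (t + 1), π i.1 (hist u i) (u i).1 (u i).2) * π (t + 1) u x.1 x.2 := by
    rw [Fin.prod_univ_castSucc]
    simp [hist_snoc_castSucc, hist_snoc_last]
  have hpprod : (∏ i : Fin (t + 1), p ((Fin.snoc u x : Fin (t+2) → S × A) i.castSucc)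
        ((Fin.snoc u x : Fin (t+2) → S × A) i.succ).1)
      = (∏ i : Fin t, p (u i.castSucc) (u i.succ).1) * p (u (Fin.last t)) x.1 := by
    rw [Fin.prod_univ_castSucc]
    simp [Fin.succ_castSucc, Fin.succ_last, -Fin.castSucc_succ]
  have h0 : (Fin.snoc u x : Fin (t+2) → S × A) 0 = u 0 := by
    rw [show ((0 : Fin (t + 2))) = Fin.castSucc 0 from rfl, Fin.snoc_castSucc]
  show p0 ((Fin.snoc u x : Fin (t+2) → S × A) 0).1 * _ * _ = _
  rw [hπprod, hpprod, h0]
  unfold pathProb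
  ring
end helpers
noncomputable def marg {S A : Type*} [Fintype S] [Fintype A]
    (p0 : S → ℝ≥0∞) (p : S × A → S → ℝ≥0∞) (πm : S → A → ℝ≥0∞) : ℕ → S → ℝ≥0∞
  | 0 => p0
  | t + 1 => fun s => ∑ y : S × A, marg p0 p πm t y.1 * πm y.1 y.2 * p y s

section helpers2
variable {S A : Type*} [Fintype S] [Fintype A] [DecidableEq S] [DecidableEq A]
variable (p0 : S → ℝ≥0∞) (p : S × A → S → ℝ≥0∞) (πm : S → A → ℝ≥0∞)

lemma sum_fin_one {β : Type*} [Fintype β] {M : Type*} [AddCommMonoid M]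
    (f : (Fin 1 → β) → M) : ∑ w : Fin 1 → β, f w = ∑ x : β, f (fun _ => x) := by
  refine Fintype.sum_equiv (Equiv.funUnique (Fin 1) β) _ _ (fun w => ?_)
  congr 1
  funext i
  rw [Subsingleton.elim i 0]
  rfl

lemma occAt_eq (t : ℕ) (s : S) (a : A) :
    (∑ w : Fin (t + 1) → S × A,
      if w (Fin.last t) = (s, a) then pathProb p0 p (liftMk πm) t w else 0)
      = marg p0 p πm t s * πm s a := by
  induction t generalizing s a with
  | zero =>
    rw [sum_fin_one]
    have : ∀ x : S × A, (if (fun _ : Fin 1 => x) (Fin.last 0) = (s,a) then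
        pathProb p0 p (liftMk πm) 0 (fun _ => x) else 0)
        = if x = (s,a) then p0 x.1 * πm x.1 x.2 else 0 := by
      intro x
      simp [pathProb, liftMk, marg]
    rw [Finset.sum_congr rfl (fun x _ => this x), Finset.sum_ite_eq' Finset.univ (s,a)
      (fun x => p0 x.1 * πm x.1 x.2)]
    simp [marg]
  | succ t ih =>
    rw [sum_snoc]
    have hterm : ∀ (u : Fin (t+1) → S × A) (x : S × A),
        (if (Fin.snoc u x : Fin (t+2) → S × A) (Fin.last (t+1)) = (s,a) then
          pathProb p0 p (liftMk πm) (t+1) (Fin.snoc u x) else 0)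
        = if x = (s,a) then
            pathProb p0 p (liftMk πm) t u * πm s a * p (u (Fin.last t)) s else 0 := by
      intro u x
      rw [Fin.snoc_last, pathProb_snoc]
      by_cases hx : x = (s,a)
      · subst hx; simp [liftMk]
      · simp [hx]
    calc ∑ u : Fin (t+1) → S × A, ∑ x : S × A,
          (if (Fin.snoc u x : Fin (t+2) → S × A) (Fin.last (t+1)) = (s,a) then
            pathProb p0 p (liftMk πm) (t+1) (Fin.snoc u x) else 0)
        = ∑ u : Fin (t+1) → S × A,
            pathProb p0 p (liftMk πm) t u * πm s a * p (u (Fin.last t)) s := by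
          refine Finset.sum_congr rfl fun u _ => ?_
          rw [Finset.sum_congr rfl (fun x _ => hterm u x),
            Finset.sum_ite_eq' Finset.univ (s,a)]
          simp
      _ = ∑ u : Fin (t+1) → S × A, ∑ y : S × A,
            (if u (Fin.last t) = y then pathProb p0 p (liftMk πm) t u * πm s a * p y s
              else 0) := by
          refine Finset.sum_congr rfl fun u _ => ?_
          rw [Finset.sum_ite_eq Finset.univ (u (Fin.last t))
            (fun y => pathProb p0 p (liftMk πm) t u * πm s a * p y s)]
          simp
      _ = ∑ y : S × A, (∑ u : Fin (t+1) → S × A,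
            (if u (Fin.last t) = y then pathProb p0 p (liftMk πm) t u else 0))
              * (πm s a * p y s) := by
          rw [Finset.sum_comm]
          refine Finset.sum_congr rfl fun y _ => ?_
          rw [Finset.sum_mul]
          refine Finset.sum_congr rfl fun u _ => ?_
          by_cases h : u (Fin.last t) = y <;> simp [h] <;> ring
      _ = marg p0 p πm (t+1) s * πm s a := by
          show _ = (∑ y : S × A, marg p0 p πm t y.1 * πm y.1 y.2 * p y s) * πm s a
          rw [Finset.sum_mul]
          refine Finset.sum_congr rfl fun y _ => ?_
          rw [ih y.1 y.2]
          ring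

lemma occ_liftMk (γ : ℝ≥0∞) (s : S) (a : A) :
    occ γ p0 p (liftMk πm) s a = (∑' t : ℕ, γ ^ t * marg p0 p πm t s) * πm s a := by
  unfold occ
  rw [← ENNReal.tsum_mul_right]
  refine tsum_congr fun t => ?_
  rw [occAt_eq]
  ring

lemma marg_sum_one (hp0 : ∑ s, p0 s = 1) (hp : ∀ x, ∑ s', p x s' = 1)
    (hπm : ∀ s, ∑ a, πm s a = 1) (t : ℕ) : ∑ s, marg p0 p πm t s = 1 := by
  induction t with
  | zero => exact hp0
  | succ t ih =>
    show ∑ s, ∑ y : S × A, marg p0 p πm t y.1 * πm y.1 y.2 * p y s = 1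
    rw [Finset.sum_comm]
    have : ∀ y : S × A, ∑ s, marg p0 p πm t y.1 * πm y.1 y.2 * p y s
        = marg p0 p πm t y.1 * πm y.1 y.2 := by
      intro y
      rw [← Finset.mul_sum, hp y, mul_one]
    rw [Finset.sum_congr rfl (fun y _ => this y), Fintype.sum_prod_type]
    calc ∑ s', ∑ a, marg p0 p πm t s' * πm s' a = ∑ s', marg p0 p πm t s' := by
          refine Finset.sum_congr rfl fun s' _ => ?_
          rw [← Finset.mul_sum, hπm s', mul_one]
      _ = 1 := ih
end helpers2
section helpers3
variable {S A : Type*} [Fintype S] [Fintype A] [DecidableEq S] [DecidableEq A]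
variable (γ : ℝ≥0∞) (p0 : S → ℝ≥0∞) (p : S × A → S → ℝ≥0∞) (πm : S → A → ℝ≥0∞)

noncomputable def dOcc : S → ℝ≥0∞ := fun s => ∑' t : ℕ, γ ^ t * marg p0 p πm t s

lemma dOcc_ne_top (hγ : γ < 1) (hp0 : ∑ s, p0 s = 1) (hp : ∀ x, ∑ s', p x s' = 1)
    (hπm : ∀ s, ∑ a, πm s a = 1) (s : S) : dOcc γ p0 p πm s ≠ ∞ := by
  have hb : ∀ t, marg p0 p πm t s ≤ 1 := by
    intro t
    rw [← marg_sum_one p0 p πm hp0 hp hπm t]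
    exact Finset.single_le_sum (f := fun s => marg p0 p πm t s) (fun _ _ => zero_le)
      (Finset.mem_univ s)
  have : dOcc γ p0 p πm s ≤ ∑' t : ℕ, γ ^ t := by
    refine ENNReal.tsum_le_tsum fun t => ?_
    calc γ ^ t * marg p0 p πm t s ≤ γ ^ t * 1 := mul_le_mul_right (hb t) _
      _ = γ ^ t := mul_one _
  refine ne_top_of_le_ne_top ?_ this
  rw [ENNReal.tsum_geometric]
  simp only [ne_eq, ENNReal.inv_eq_top]
  exact (tsub_pos_of_lt hγ).ne'

lemma dOcc_rec (s : S) :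
    dOcc γ p0 p πm s = p0 s + γ * ∑ y : S × A, dOcc γ p0 p πm y.1 * πm y.1 y.2 * p y s := by
  have h0 := tsum_eq_zero_add' (f := fun t : ℕ => γ ^ t * marg p0 p πm t s) ENNReal.summable
  rw [dOcc] at *
  rw [h0]
  simp only [pow_zero, one_mul]
  congr 1
  calc ∑' t : ℕ, γ ^ (t+1) * marg p0 p πm (t+1) s
      = ∑' t : ℕ, γ * (γ ^ t * ∑ y : S × A, marg p0 p πm t y.1 * πm y.1 y.2 * p y s) := by
        refine tsum_congr fun t => ?_
        show γ ^ (t+1) * marg p0 p πm (t+1) s = _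
        rw [pow_succ]
        show _ = γ * (γ ^ t * marg p0 p πm (t+1) s)
        ring
    _ = γ * ∑' t : ℕ, ∑ y : S × A, γ ^ t * (marg p0 p πm t y.1 * πm y.1 y.2 * p y s) := by
        rw [ENNReal.tsum_mul_left]
        congr 1
        refine tsum_congr fun t => ?_
        rw [Finset.mul_sum]
    _ = γ * ∑ y : S × A, dOcc γ p0 p πm y.1 * πm y.1 y.2 * p y s := by
        congr 1
        rw [Summable.tsum_finsetSum (fun i _ => ENNReal.summable)]
        refine Finset.sum_congr rfl fun y _ => ?_
        calc ∑' t : ℕ, γ ^ t * (marg p0 p πm t y.1 * πm y.1 y.2 * p y s)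
            = ∑' t : ℕ, (γ ^ t * marg p0 p πm t y.1) * (πm y.1 y.2 * p y s) := by
              refine tsum_congr fun t => ?_; ring
          _ = dOcc γ p0 p πm y.1 * πm y.1 y.2 * p y s := by
              rw [ENNReal.tsum_mul_right, dOcc]; ring

/-- Fixed point comparison -/
lemma fixed_le (hγ : γ < 1) (K : S → S → ℝ≥0∞) (hK : ∀ s', ∑ s, K s' s = 1)
    (c x y : S → ℝ≥0∞) (hx : ∀ s, x s ≠ ∞)
    (hxe : ∀ s, x s = c s + γ * ∑ s', x s' * K s' s)
    (hye : ∀ s, y s = c s + γ * ∑ s', y s' * K s' s) :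
    ∀ s, x s ≤ y s := by
  set e : ℕ → S → ℝ≥0∞ := fun n => Nat.rec x (fun _ en s => γ * ∑ s', en s' * K s' s) n
    with he
  have hestep : ∀ n s, e (n+1) s = γ * ∑ s', e n s' * K s' s := fun n s => rfl
  have hA : ∀ n s, x s ≤ y s + e n s := by
    intro n
    induction n with
    | zero => intro s; exact le_add_self
    | succ n ih =>
      intro s
      rw [hxe s, hye s, hestep]
      rw [add_assoc, ← mul_add, ← Finset.sum_add_distrib]
      refine add_le_add_right (mul_le_mul_right (Finset.sum_le_sum fun s' _ => ?_) γ) _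
      rw [← add_mul]
      exact mul_le_mul_left (ih s') _
  have hB : ∀ n, ∑ s, e n s = γ ^ n * ∑ s, x s := by
    intro n
    induction n with
    | zero =>
      simp only [pow_zero, one_mul]
      exact Finset.sum_congr rfl fun s _ => rfl
    | succ n ih =>
      calc ∑ s, e (n+1) s = γ * ∑ s, ∑ s', e n s' * K s' s := by
            rw [Finset.mul_sum]
        _ = γ * ∑ s', e n s' * ∑ s, K s' s := by
            rw [Finset.sum_comm]
            congr 1
            exact Finset.sum_congr rfl fun s' _ => (Finset.mul_sum _ _ _).symm
        _ = γ ^ (n+1) * ∑ s, x s := by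
            rw [pow_succ]
            have : ∀ s', e n s' * ∑ s, K s' s = e n s' := fun s' => by rw [hK s', mul_one]
            rw [Finset.sum_congr rfl fun s' _ => this s', ih]
            ring
  intro s
  have hbound : ∀ n, x s ≤ y s + γ ^ n * ∑ s', x s' := by
    intro n
    calc x s ≤ y s + e n s := hA n s
      _ ≤ y s + γ ^ n * ∑ s', x s' := by
          refine add_le_add_right ?_ _
          rw [← hB n]
          exact Finset.single_le_sum (f := fun s' => e n s') (fun _ _ => zero_le)
            (Finset.mem_univ s)
  have hfin : (∑ s', x s') ≠ ∞ := by
    exact (ENNReal.sum_lt_top.2 fun s' _ => (hx s').lt_top).ne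
  have htend : Filter.Tendsto (fun n : ℕ => y s + γ ^ n * ∑ s', x s') Filter.atTop
      (nhds (y s)) := by
    have h1 : Filter.Tendsto (fun n : ℕ => γ ^ n * ∑ s', x s') Filter.atTop (nhds 0) := by
      have := ENNReal.tendsto_pow_atTop_nhds_zero_of_lt_one hγ
      have := ENNReal.Tendsto.mul_const this (Or.inr hfin)
      simpa using this
    have := Filter.Tendsto.const_add (y s) h1
    simpa using this
  exact ge_of_tendsto' htend hbound
end helpers3
section helpers4
variable {S A : Type*} [Fintype S] [Fintype A] [DecidableEq S] [DecidableEq A]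
variable {N : ℕ} (p0 : S → ℝ≥0∞) (p : S × A → S → ℝ≥0∞) (πs : Fin N → S → A → ℝ≥0∞)

lemma prob_le_one {β : Type*} [Fintype β] (f : β → ℝ≥0∞) (hf : ∑ b, f b = 1) (b : β) :
    f b ≤ 1 := by
  rw [← hf]
  exact Finset.single_le_sum (fun _ _ => zero_le) (Finset.mem_univ b)

lemma pathProb_liftMk_le_one (hp0 : ∑ s, p0 s = 1) (hp : ∀ x, ∑ s', p x s' = 1)
    (πm : S → A → ℝ≥0∞) (hπm : ∀ s, ∑ a, πm s a = 1) (t : ℕ) (w : Fin (t + 1) → S × A) :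
    pathProb p0 p (liftMk πm) t w ≤ 1 := by
  unfold pathProb
  have h1 : p0 (w 0).1 ≤ 1 := prob_le_one p0 hp0 _
  have h2 : (∏ i : Fin (t + 1), liftMk πm i.1 (hist w i) (w i).1 (w i).2) ≤ 1 := by
    refine Finset.prod_le_one (fun _ _ => zero_le) (fun i _ => ?_)
    exact prob_le_one (πm (w i).1) (hπm _) _
  have h3 : (∏ i : Fin t, p (w i.castSucc) (w i.succ).1) ≤ 1 := by
    refine Finset.prod_le_one (fun _ _ => zero_le) (fun i _ => ?_)
    exact prob_le_one (p (w i.castSucc)) (hp _) _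
  calc p0 (w 0).1 * _ * _ ≤ 1 * 1 * 1 := by
        exact mul_le_mul' (mul_le_mul' h1 h2) h3
    _ = 1 := by ring

lemma mix_pathProb (hp0 : ∑ s, p0 s = 1) (hp : ∀ x, ∑ s', p x s' = 1)
    (hπs : ∀ i s, ∑ a, πs i s a = 1) :
    ∀ (t : ℕ) (w : Fin (t + 1) → S × A),
      pathProb p0 p (mixturePolicy p0 p πs) t w
        = (∑ i, pathProb p0 p (liftMk (πs i)) t w) / (N : ℝ≥0∞) := by
  intro t
  induction t with
  | zero =>
    intro w
    have hpp : ∀ (π : (t : ℕ) → (Fin t → S × A) → S → A → ℝ≥0∞),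
        pathProb p0 p π 0 w = p0 (w 0).1 * π 0 (hist w 0) (w 0).1 (w 0).2 := by
      intro π
      unfold pathProb
      simp
    rw [hpp]
    have hsc : ∀ i, pathProb p0 p (liftMk (πs i)) 0 w
        = p0 (w 0).1 * πs i (w 0).1 (w 0).2 := fun i => hpp _
    rw [Finset.sum_congr rfl (fun i _ => hsc i)]
    show p0 (w 0).1 * ((∑ i, histProbM p0 p (πs i) 0 (hist w 0) (w 0).1 * πs i (w 0).1 (w 0).2)
        / (∑ i, histProbM p0 p (πs i) 0 (hist w 0) (w 0).1)) = _
    have hh : ∀ i, histProbM p0 p (πs i) 0 (hist w 0) (w 0).1 = p0 (w 0).1 := fun _ => rfl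
    simp only [hh]
    rw [← Finset.mul_sum, Finset.sum_const, Finset.card_univ, Fintype.card_fin,
      nsmul_eq_mul]
    by_cases hz : p0 (w 0).1 = 0
    · simp [hz]
    · have hfin : p0 (w 0).1 ≠ ∞ := (lt_of_le_of_lt (prob_le_one p0 hp0 _)
        (by norm_num)).ne
      rw [show (N : ℝ≥0∞) * p0 (w 0).1 = p0 (w 0).1 * N from mul_comm _ _,
        ENNReal.mul_div_mul_left _ _ hz hfin, mul_div_assoc]
  | succ t ih =>
    intro w
    rw [← Fin.snoc_init_self w]
    set u : Fin (t + 1) → S × A := Fin.init w with hu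
    set x : S × A := w (Fin.last (t + 1)) with hx
    rw [pathProb_snoc]
    have hsc : ∀ i, pathProb p0 p (liftMk (πs i)) (t + 1) (Fin.snoc u x)
        = pathProb p0 p (liftMk (πs i)) t u * πs i x.1 x.2 * p (u (Fin.last t)) x.1 := by
      intro i
      rw [pathProb_snoc]
      rfl
    rw [Finset.sum_congr rfl (fun i _ => hsc i), ih]
    set P : Fin N → ℝ≥0∞ := fun i => pathProb p0 p (liftMk (πs i)) t u with hP
    set q : ℝ≥0∞ := p (u (Fin.last t)) x.1 with hq
    set b : Fin N → ℝ≥0∞ := fun i => πs i x.1 x.2 with hb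
    have hmixval : mixturePolicy p0 p πs (t + 1) u x.1 x.2
        = (∑ i, P i * q * b i) / (∑ i, P i * q) := rfl
    rw [hmixval]
    set D : ℝ≥0∞ := ∑ i, P i with hD
    set M : ℝ≥0∞ := ∑ i, P i * b i with hM
    have h1 : (∑ i, P i * q * b i) = M * q := by
      rw [hM, Finset.sum_mul]
      exact Finset.sum_congr rfl fun i _ => by ring
    have h2 : (∑ i, P i * q) = D * q := by
      rw [hD, Finset.sum_mul]
    have h3 : (∑ i, P i * b i * q) = M * q := by
      rw [hM, Finset.sum_mul]
    rw [h1, h2, h3]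
    by_cases hq0 : q = 0
    · simp [hq0]
    by_cases hD0 : D = 0
    · have hM0 : M = 0 := by
        rw [hM]
        refine Finset.sum_eq_zero fun i _ => ?_
        have : P i = 0 := by
          have := (Finset.sum_eq_zero_iff.1 hD0) i (Finset.mem_univ i)
          exact this
        rw [this, zero_mul]
      simp [hD0, hM0]
    · have hqt : q ≠ ∞ := (lt_of_le_of_lt (prob_le_one (p (u (Fin.last t))) (hp _) _)
        (by norm_num)).ne
      have hDt : D ≠ ∞ := by
        rw [hD]
        refine (ENNReal.sum_lt_top.2 fun i _ => ?_).ne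
        exact lt_of_le_of_lt (pathProb_liftMk_le_one p0 p hp0 hp (πs i) (hπs i) t u)
          (by norm_num)
      rw [ENNReal.mul_div_mul_right _ _ hq0 hqt]
      rw [div_eq_mul_inv, div_eq_mul_inv, div_eq_mul_inv]
      rw [show D * (N : ℝ≥0∞)⁻¹ * (M * D⁻¹) * q = (D * D⁻¹) * (M * q * (N : ℝ≥0∞)⁻¹) from
        by ring, ENNReal.mul_inv_cancel hD0 hDt, one_mul]

lemma occ_mix (γ : ℝ≥0∞) (hp0 : ∑ s, p0 s = 1) (hp : ∀ x, ∑ s', p x s' = 1)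
    (hπs : ∀ i s, ∑ a, πs i s a = 1) (s : S) (a : A) :
    occ γ p0 p (mixturePolicy p0 p πs) s a
      = (∑ i, occ γ p0 p (liftMk (πs i)) s a) / (N : ℝ≥0∞) := by
  unfold occ
  rw [div_eq_mul_inv, ← Summable.tsum_finsetSum (fun (i : Fin N) (_ : i ∈ Finset.univ) => ENNReal.summable),
    ← ENNReal.tsum_mul_right]
  refine tsum_congr fun t => ?_
  have hterm : ∀ w : Fin (t + 1) → S × A,
      (if w (Fin.last t) = (s, a) then pathProb p0 p (mixturePolicy p0 p πs) t w else 0)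
      = (∑ i, if w (Fin.last t) = (s, a) then pathProb p0 p (liftMk (πs i)) t w else 0)
          * (N : ℝ≥0∞)⁻¹ := by
    intro w
    by_cases h : w (Fin.last t) = (s, a)
    · simp only [h, if_true]
      rw [mix_pathProb p0 p πs hp0 hp hπs, div_eq_mul_inv]
    · simp [h]
  rw [Finset.sum_congr rfl (fun w _ => hterm w), ← Finset.sum_mul, Finset.sum_comm,
    Finset.sum_mul, Finset.mul_sum]
  rw [Finset.sum_mul]
  exact Finset.sum_congr rfl fun i _ => by ring
end helpers4
section helpers5
variable {S A : Type*} [Fintype S] [Fintype A] [DecidableEq S] [DecidableEq A]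

lemma occ_liftMk' (γ : ℝ≥0∞) (p0 : S → ℝ≥0∞) (p : S × A → S → ℝ≥0∞) (πm : S → A → ℝ≥0∞)
    (s : S) (a : A) :
    occ γ p0 p (liftMk πm) s a = dOcc γ p0 p πm s * πm s a := occ_liftMk p0 p πm γ s a
end helpers5

/-- Mixture occupancy equivalence, finite case: the occupancy of the uniform
mixture `π̄` of Markovian policies `π_1, …, π_N` is the average of their
occupancies, and the Markovian policy
`π̃(a|s) = (∑ᵢ μ_γ^{π_i}(s,a)) / (∑ᵢ μ_γ^{π_i}(s))` has the same occupancy as `π̄`. -/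
theorem mixture_occupancy_equivalence {S A : Type*}
    [Fintype S] [Fintype A] [DecidableEq S] [DecidableEq A]
    (γ : ℝ≥0∞) (hγ : γ < 1)
    (p0 : S → ℝ≥0∞) (hp0 : ∑ s, p0 s = 1)
    (p : S × A → S → ℝ≥0∞) (hp : ∀ x, ∑ s', p x s' = 1)
    (N : ℕ) (hN : 0 < N)
    (πs : Fin N → S → A → ℝ≥0∞) (hπs : ∀ i s, ∑ a, πs i s a = 1)
    (tπ : S → A → ℝ≥0∞)
    (htπ : ∀ s a, (∑ i, ∑ b, occ γ p0 p (liftMk (πs i)) s b) ≠ 0 →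
      tπ s a = (∑ i, occ γ p0 p (liftMk (πs i)) s a) /
        (∑ i, ∑ b, occ γ p0 p (liftMk (πs i)) s b))
    (htπ1 : ∀ s, ∑ a, tπ s a = 1) :
    (∀ s a, occ γ p0 p (mixturePolicy p0 p πs) s a =
        (∑ i, occ γ p0 p (liftMk (πs i)) s a) / (N : ℝ≥0∞)) ∧
    (∀ s a, occ γ p0 p (liftMk tπ) s a =
        occ γ p0 p (mixturePolicy p0 p πs) s a) := by

  have hocc : ∀ (i : Fin N) (s : S) (a : A),
      occ γ p0 p (liftMk (πs i)) s a = dOcc γ p0 p (πs i) s * πs i s a :=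
    fun i s a => occ_liftMk' γ p0 p (πs i) s a
  set D : S → ℝ≥0∞ := fun s => ∑ i, dOcc γ p0 p (πs i) s with hDdef
  set M : S → A → ℝ≥0∞ := fun s a => ∑ i, dOcc γ p0 p (πs i) s * πs i s a with hMdef
  have hoccsum : ∀ s a, (∑ i, occ γ p0 p (liftMk (πs i)) s a) = M s a := by
    intro s a
    exact Finset.sum_congr rfl fun i _ => hocc i s a
  have hoccb : ∀ s, (∑ i, ∑ b, occ γ p0 p (liftMk (πs i)) s b) = D s := by
    intro s
    refine Finset.sum_congr rfl fun i _ => ?_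
    calc ∑ b, occ γ p0 p (liftMk (πs i)) s b = ∑ b, dOcc γ p0 p (πs i) s * πs i s b :=
          Finset.sum_congr rfl fun b _ => hocc i s b
      _ = dOcc γ p0 p (πs i) s := by rw [← Finset.mul_sum, hπs i s, mul_one]
  have hDfin : ∀ s, D s ≠ ∞ := by
    intro s
    refine (ENNReal.sum_lt_top.2 fun i _ => ?_).ne
    exact (dOcc_ne_top γ p0 p (πs i) hγ hp0 hp (hπs i) s).lt_top
  have hMD : ∀ s a, M s a = D s * tπ s a := by
    intro s a
    by_cases hD0 : D s = 0
    · have : ∀ i, dOcc γ p0 p (πs i) s = 0 := by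
        intro i
        exact (Finset.sum_eq_zero_iff.1 hD0) i (Finset.mem_univ i)
      rw [hD0, zero_mul, hMdef]
      exact Finset.sum_eq_zero fun i _ => by rw [this i, zero_mul]
    · have hcond : (∑ i, ∑ b, occ γ p0 p (liftMk (πs i)) s b) ≠ 0 := by
        rw [hoccb s]; exact hD0
      have := htπ s a hcond
      rw [hoccb s, hoccsum s a] at this
      rw [this]
      exact (ENNReal.mul_div_cancel hD0 (hDfin s)).symm
  have part1 : ∀ s a, occ γ p0 p (mixturePolicy p0 p πs) s a
      = (∑ i, occ γ p0 p (liftMk (πs i)) s a) / (N : ℝ≥0∞) :=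
    fun s a => occ_mix p0 p πs γ hp0 hp hπs s a
  refine ⟨part1, fun s a => ?_⟩
  -- fixed point setup
  set K : S → S → ℝ≥0∞ := fun s' s => ∑ a', tπ s' a' * p (s', a') s with hKdef
  have hK : ∀ s', ∑ s, K s' s = 1 := by
    intro s'
    rw [hKdef]
    simp only
    rw [Finset.sum_comm]
    calc ∑ a', ∑ s, tπ s' a' * p (s', a') s = ∑ a', tπ s' a' := by
          refine Finset.sum_congr rfl fun a' _ => ?_
          rw [← Finset.mul_sum, hp (s', a'), mul_one]
      _ = 1 := htπ1 s'
  have hNne : (N : ℝ≥0∞) ≠ 0 := Nat.cast_ne_zero.2 hN.ne'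
  have hNfin : (N : ℝ≥0∞) ≠ ∞ := ENNReal.natCast_ne_top N
  set x : S → ℝ≥0∞ := fun s => D s * (N : ℝ≥0∞)⁻¹ with hxdef
  set y : S → ℝ≥0∞ := fun s => dOcc γ p0 p tπ s with hydef
  have hyrec : ∀ s, y s = p0 s + γ * ∑ s', y s' * K s' s := by
    intro s
    rw [hydef]
    simp only
    rw [dOcc_rec γ p0 p tπ s]
    congr 1
    congr 1
    rw [Fintype.sum_prod_type]
    refine Finset.sum_congr rfl fun s' _ => ?_
    rw [hKdef]
    simp only
    rw [Finset.mul_sum]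
    refine Finset.sum_congr rfl fun a' _ => ?_
    ring
  have hDrec : ∀ s, D s = (N : ℝ≥0∞) * p0 s + γ * ∑ s', D s' * K s' s := by
    intro s
    calc D s = ∑ i, (p0 s + γ * ∑ z : S × A, dOcc γ p0 p (πs i) z.1 * πs i z.1 z.2 * p z s) :=
          Finset.sum_congr rfl fun i _ => dOcc_rec γ p0 p (πs i) s
      _ = (N : ℝ≥0∞) * p0 s + γ * ∑ z : S × A, M z.1 z.2 * p z s := by
          rw [Finset.sum_add_distrib, Finset.sum_const, Finset.card_univ, Fintype.card_fin,
            nsmul_eq_mul, ← Finset.mul_sum, Finset.sum_comm]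
          congr 2
          refine Finset.sum_congr rfl fun z _ => ?_
          rw [hMdef]
          simp only
          rw [Finset.sum_mul]
      _ = (N : ℝ≥0∞) * p0 s + γ * ∑ s', D s' * K s' s := by
          congr 1
          congr 1
          rw [Fintype.sum_prod_type]
          refine Finset.sum_congr rfl fun s' _ => ?_
          rw [hKdef]
          simp only
          rw [Finset.mul_sum]
          refine Finset.sum_congr rfl fun a' _ => ?_
          rw [hMD s' a']
          ring
  have hxrec : ∀ s, x s = p0 s + γ * ∑ s', x s' * K s' s := by
    intro s
    rw [hxdef]
    simp only
    rw [hDrec s, add_mul]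
    congr 1
    · rw [mul_comm ((N : ℝ≥0∞)) (p0 s), mul_assoc, ENNReal.mul_inv_cancel hNne hNfin,
        mul_one]
    · rw [mul_assoc, Finset.sum_mul]
      congr 1
      refine Finset.sum_congr rfl fun s' _ => ?_
      ring
  have hxfin : ∀ s, x s ≠ ∞ := by
    intro s
    rw [hxdef]
    exact ENNReal.mul_ne_top (hDfin s) (ENNReal.inv_ne_top.2 hNne)
  have hyfin : ∀ s, y s ≠ ∞ := fun s => dOcc_ne_top γ p0 p tπ hγ hp0 hp htπ1 s
  have hxy : ∀ s, x s = y s := by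
    intro s
    exact le_antisymm (fixed_le γ hγ K hK p0 x y hxfin hxrec hyrec s)
      (fixed_le γ hγ K hK p0 y x hyfin hyrec hxrec s)
  rw [occ_liftMk' γ p0 p tπ s a, part1 s a, hoccsum s a, hMD s a]
  have : dOcc γ p0 p tπ s = x s := (hxy s).symm
  rw [this, hxdef]
  simp only
  rw [div_eq_mul_inv]
  ring
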